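/- For every n ≥ 2, the singular twisted virtual pure braid monoid STVP_n := φ₁⁻¹(identity), regarded as a submonoid of STVB_n, is generated as a monoid by the elements λ_{k,l}, λ̄_{k,l} and y_{k,l} for 1 ≤ k ≠ l ≤ n together with γ_1,…,γ_n. -/

import Mathlib

/-!
Each generator `σ_i`, `σ̄_i`, `τ_i` of `STVB_n` is a generator of `STVP_n` followed by `ρ_i`
(`σ_i = λ̄_{i,i+1} ρ_i`, `σ̄_i = λ_{i+1,i} ρ_i`, `τ_i = y_{i,i+1} ρ_i`), and conjugation by `ρ_i`
permutes the generators of `STVP_n`: `ρ_i λ_{k,l} ρ_i = λ_{s_i k, s_i l}`, likewise for `λ̄` and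
`y`, and `ρ_i γ_j ρ_i = γ_{s_i j}`. For `λ`, `λ̄`, `y` this only uses that the base elements
`ρ_a σ̄_a`, `σ_a ρ_a`, `τ_a ρ_a` commute with the distant `ρ`'s and satisfy
`ρ_a X_{a+1} ρ_a = ρ_{a+1} X_a ρ_{a+1}`.

Pushing every `ρ` to the right writes any element as `c w`, with `c` in the submonoid generated
by the `λ`, `λ̄`, `y`, `γ` and `w` a word in the `ρ_i`. On `ker φ₁` the permutation of `w` is
trivial, and then so is `w`: the `ρ_i` satisfy the Coxeter relations of type `A_{n-1}`, which
present `S_n`, as the coset decomposition `S_{m+1} = ⋃_j ρ_j ρ_{j+1} ⋯ ρ_{m-1} S_m` shows.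
-/

namespace SingTVB

/-- Generators of the singular twisted virtual braid monoid `STVB n`
(0-based indexing: `sig i` is the paper's σ_{i+1}, `gam j` is the paper's γ_{j+1}). -/
inductive Gen (n : ℕ) : Type
  | sig : Fin (n - 1) → Gen n
  | sigb : Fin (n - 1) → Gen n
  | rho : Fin (n - 1) → Gen n
  | tau : Fin (n - 1) → Gen n
  | gam : Fin n → Gen n

abbrev FM (n : ℕ) := FreeMonoid (Gen n)

/-- The strand `i` (lower strand of the `i`-th crossing), as an element of `Fin n`. -/
def fa {n : ℕ} (i : Fin (n - 1)) : Fin n := ⟨i.val, by have := i.isLt; omega⟩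
/-- The strand `i+1` (upper strand of the `i`-th crossing), as an element of `Fin n`. -/
def fb {n : ℕ} (i : Fin (n - 1)) : Fin n := ⟨i.val + 1, by have := i.isLt; omega⟩

def Ws {n : ℕ} (i : Fin (n - 1)) : FM n := FreeMonoid.of (Gen.sig i)
def Wsb {n : ℕ} (i : Fin (n - 1)) : FM n := FreeMonoid.of (Gen.sigb i)
def Wr {n : ℕ} (i : Fin (n - 1)) : FM n := FreeMonoid.of (Gen.rho i)
def Wt {n : ℕ} (i : Fin (n - 1)) : FM n := FreeMonoid.of (Gen.tau i)
def Wg {n : ℕ} (j : Fin n) : FM n := FreeMonoid.of (Gen.gam j)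

/-- `|i - j| > 1`. -/
def Far {m : ℕ} (i j : Fin m) : Prop := i.val + 1 < j.val ∨ j.val + 1 < i.val

/-- Defining relations of the singular twisted virtual braid monoid. -/
inductive Rel (n : ℕ) : FM n → FM n → Prop
  | ss {i j : Fin (n - 1)} (h : Far i j) : Rel n (Ws i * Ws j) (Ws j * Ws i)
  | rr {i j : Fin (n - 1)} (h : Far i j) : Rel n (Wr i * Wr j) (Wr j * Wr i)
  | sr {i j : Fin (n - 1)} (h : Far i j) : Rel n (Ws i * Wr j) (Wr j * Ws i)
  | tt {i j : Fin (n - 1)} (h : Far i j) : Rel n (Wt i * Wt j) (Wt j * Wt i)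
  | st {i j : Fin (n - 1)} (h : Far i j) : Rel n (Ws i * Wt j) (Wt j * Ws i)
  | tr {i j : Fin (n - 1)} (h : Far i j) : Rel n (Wt i * Wr j) (Wr j * Wt i)
  | sss {i j : Fin (n - 1)} (h : j.val = i.val + 1) :
      Rel n (Ws i * Ws j * Ws i) (Ws j * Ws i * Ws j)
  | rrr {i j : Fin (n - 1)} (h : j.val = i.val + 1) :
      Rel n (Wr i * Wr j * Wr i) (Wr j * Wr i * Wr j)
  | rsr {i j : Fin (n - 1)} (h : j.val = i.val + 1) :
      Rel n (Wr i * Ws j * Wr i) (Wr j * Ws i * Wr j)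
  | rtr {i j : Fin (n - 1)} (h : j.val = i.val + 1) :
      Rel n (Wr i * Wt j * Wr i) (Wr j * Wt i * Wr j)
  | sst {i j : Fin (n - 1)} (h : j.val = i.val + 1) :
      Rel n (Ws i * Ws j * Wt i) (Wt j * Ws i * Ws j)
  | sst' {i j : Fin (n - 1)} (h : j.val = i.val + 1) :
      Rel n (Ws j * Ws i * Wt j) (Wt i * Ws j * Ws i)
  | rho2 (i : Fin (n - 1)) : Rel n (Wr i * Wr i) 1
  | ssb (i : Fin (n - 1)) : Rel n (Ws i * Wsb i) 1
  | sbs (i : Fin (n - 1)) : Rel n (Wsb i * Ws i) 1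
  | stc (i : Fin (n - 1)) : Rel n (Ws i * Wt i) (Wt i * Ws i)
  | grel (i : Fin (n - 1)) : Rel n (Wg (fb i) * Wr i) (Wr i * Wg (fa i))
  | rsrg (i : Fin (n - 1)) :
      Rel n (Wr i * Ws i * Wr i) (Wg (fb i) * Wg (fa i) * Ws i * Wg (fa i) * Wg (fb i))
  | rtrg (i : Fin (n - 1)) :
      Rel n (Wr i * Wt i * Wr i) (Wg (fb i) * Wg (fa i) * Wt i * Wg (fa i) * Wg (fb i))
  | g2 (j : Fin n) : Rel n (Wg j * Wg j) 1
  | gg (i j : Fin n) : Rel n (Wg i * Wg j) (Wg j * Wg i)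
  | grc {i : Fin (n - 1)} {j : Fin n} (h1 : j ≠ fa i) (h2 : j ≠ fb i) :
      Rel n (Wg j * Wr i) (Wr i * Wg j)
  | sgc {i : Fin (n - 1)} {j : Fin n} (h1 : j ≠ fa i) (h2 : j ≠ fb i) :
      Rel n (Ws i * Wg j) (Wg j * Ws i)
  | tgc {i : Fin (n - 1)} {j : Fin n} (h1 : j ≠ fa i) (h2 : j ≠ fb i) :
      Rel n (Wt i * Wg j) (Wg j * Wt i)

/-- The singular twisted virtual braid monoid on `n` strands. -/
abbrev STVB (n : ℕ) := PresentedMonoid (Rel n)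

def mkS (n : ℕ) : FM n →* STVB n := PresentedMonoid.mk (Rel n)

def sigE (n : ℕ) (i : Fin (n - 1)) : STVB n := mkS n (Ws i)
def sigbE (n : ℕ) (i : Fin (n - 1)) : STVB n := mkS n (Wsb i)
def rhoE (n : ℕ) (i : Fin (n - 1)) : STVB n := mkS n (Wr i)
def tauE (n : ℕ) (i : Fin (n - 1)) : STVB n := mkS n (Wt i)
def gamE (n : ℕ) (j : Fin n) : STVB n := mkS n (Wg j)

/-- The transposition `(i, i+1)` in the symmetric group on `Fin n`. -/
def swp {n : ℕ} (i : Fin (n - 1)) : Equiv.Perm (Fin n) := Equiv.swap (fa i) (fb i)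

end SingTVB
namespace SingTVB

/-- ρ-generator word with a natural-number (0-based) index; junk value `1` out of range. -/
def WrN (n : ℕ) (k : ℕ) : FM n := if h : k < n - 1 then Wr ⟨k, h⟩ else 1
def WsN (n : ℕ) (k : ℕ) : FM n := if h : k < n - 1 then Ws ⟨k, h⟩ else 1
def WsbN (n : ℕ) (k : ℕ) : FM n := if h : k < n - 1 then Wsb ⟨k, h⟩ else 1
def WtN (n : ℕ) (k : ℕ) : FM n := if h : k < n - 1 then Wt ⟨k, h⟩ else 1

/-- The ascending word `ρ_{i+1} ρ_{i+2} ⋯ ρ_{j-1}` (0-based strand indices `i < j`). -/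
def asc (n i j : ℕ) : FM n := ((List.range' (i + 1) (j - 1 - i)).map (WrN n)).prod
/-- The descending word `ρ_{j-1} ρ_{j-2} ⋯ ρ_{i+1}` (0-based strand indices `i < j`). -/
def desc (n i j : ℕ) : FM n := ((List.range' (i + 1) (j - 1 - i)).reverse.map (WrN n)).prod

/-- The word for the generator `λ_{i,j}` (0-based strands `i ≠ j`), built from
`λ_{i,i+1} = ρ_i σ̄_i` and `λ_{i+1,i} = ρ_i λ_{i,i+1} ρ_i` by conjugation. -/
def lamW (n i j : ℕ) : FM n :=
  if i < j then desc n i j * (WrN n i * WsbN n i) * asc n i j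
  else desc n j i * (WrN n j * (WrN n j * WsbN n j) * WrN n j) * asc n j i

/-- The word for `λ̄_{i,j}`, built from `λ̄_{i,i+1} = σ_i ρ_i`. -/
def lamBarW (n i j : ℕ) : FM n :=
  if i < j then desc n i j * (WsN n i * WrN n i) * asc n i j
  else desc n j i * (WrN n j * (WsN n j * WrN n j) * WrN n j) * asc n j i

/-- The word for `y_{i,j}`, built from `y_{i,i+1} = τ_i ρ_i`. -/
def yW (n i j : ℕ) : FM n :=
  if i < j then desc n i j * (WtN n i * WrN n i) * asc n i j
  else desc n j i * (WrN n j * (WtN n j * WrN n j) * WrN n j) * asc n j i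

/-- The word for `x_{i,j}`, built from `x_{i,i+1} = σ_i` and `x_{i+1,i} = ρ_i σ_i ρ_i`. -/
def xW (n i j : ℕ) : FM n :=
  if i < j then desc n i j * WsN n i * asc n i j
  else desc n j i * (WrN n j * WsN n j * WrN n j) * asc n j i

/-- The word for `x̄_{i,j}`, with `σ̄` in place of `σ`. -/
def xBarW (n i j : ℕ) : FM n :=
  if i < j then desc n i j * WsbN n i * asc n i j
  else desc n j i * (WrN n j * WsbN n j * WrN n j) * asc n j i

/-- The word for `z_{i,j}`, built from `z_{i,i+1} = τ_i` and `z_{i+1,i} = ρ_i τ_i ρ_i`. -/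
def zW (n i j : ℕ) : FM n :=
  if i < j then desc n i j * WtN n i * asc n i j
  else desc n j i * (WrN n j * WtN n j * WrN n j) * asc n j i

def lam (n : ℕ) (i j : Fin n) : STVB n := mkS n (lamW n i j)
def lamBar (n : ℕ) (i j : Fin n) : STVB n := mkS n (lamBarW n i j)
def yel (n : ℕ) (i j : Fin n) : STVB n := mkS n (yW n i j)
def xel (n : ℕ) (i j : Fin n) : STVB n := mkS n (xW n i j)
def xBar (n : ℕ) (i j : Fin n) : STVB n := mkS n (xBarW n i j)
def zel (n : ℕ) (i j : Fin n) : STVB n := mkS n (zW n i j)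

end SingTVB

namespace SingTVB

section ExtendByOne

variable {n : ℕ} {M : Type*} [One M]

def extendByOne (x : Fin (n - 1) → M) (k : ℕ) : M :=
  if h : k < n - 1 then x ⟨k, h⟩ else 1

theorem extendByOne_of_lt (x : Fin (n - 1) → M) {k : ℕ} (hk : k < n - 1) :
    extendByOne x k = x ⟨k, hk⟩ := dif_pos hk

theorem extendByOne_of_not_lt (x : Fin (n - 1) → M) {k : ℕ} (hk : ¬ k < n - 1) :
    extendByOne x k = 1 := dif_neg hk

end ExtendByOne

section TypeA

variable {M : Type*} [Monoid M] {n : ℕ}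

/-- `D a` is an element on the strands `a, a + 1` that the `r i` move around as they move
`r a`, in the way of the relations `ρ_i σ_{i+1} ρ_i = ρ_{i+1} σ_i ρ_{i+1}`. -/
structure BraidCompatible (n : ℕ) (r D : ℕ → M) : Prop where
  commute_of_far : ∀ e a, e + 1 < a ∨ a + 1 < e → Commute (r e) (D a)
  braid : ∀ a, a + 1 < n - 1 → r a * D (a + 1) * r a = r (a + 1) * D a * r (a + 1)

structure CoxeterTypeA (n : ℕ) (r : ℕ → M) : Prop extends BraidCompatible n r r where
  mul_self : ∀ i, r i * r i = 1

variable {r : ℕ → M}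

namespace CoxeterTypeA

theorem mul_self_mul (hr : CoxeterTypeA n r) (i : ℕ) (x : M) : r i * (r i * x) = x := by
  rw [← mul_assoc, hr.mul_self, one_mul]

theorem conj_conj (hr : CoxeterTypeA n r) (i : ℕ) (x : M) :
    r i * (r i * x * r i) * r i = x := by
  simp only [mul_assoc, hr.mul_self_mul, hr.mul_self, mul_one]

theorem commute_prod (hr : CoxeterTypeA n r) {i : ℕ} {u : List ℕ}
    (hu : ∀ e ∈ u, i + 1 < e ∨ e + 1 < i) : Commute (r i) (u.map r).prod :=
  Commute.list_prod_right _ _ <| by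
    simpa only [List.forall_mem_map] using fun e he => hr.commute_of_far i e (hu e he)

theorem prod_reverse_mul_prod (hr : CoxeterTypeA n r) (u : List ℕ) :
    (u.reverse.map r).prod * (u.map r).prod = 1 := by
  induction u with
  | nil => simp
  | cons e u ih =>
    simp only [List.reverse_cons, List.map_append, List.prod_append, List.map_cons,
      List.prod_cons, List.map_nil, List.prod_nil, mul_one, mul_assoc, hr.mul_self_mul, ih]

theorem prod_mul_prod_reverse (hr : CoxeterTypeA n r) (u : List ℕ) :
    (u.map r).prod * (u.reverse.map r).prod = 1 := by
  simpa using hr.prod_reverse_mul_prod u.reverse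

theorem prodMk (hr : CoxeterTypeA n r) {N : Type*} [Monoid N] {s : ℕ → N}
    (hs : CoxeterTypeA n s) : CoxeterTypeA n fun i => (r i, s i) where
  commute_of_far e a h := Prod.ext (hr.commute_of_far e a h) (hs.commute_of_far e a h)
  braid a h := Prod.ext (hr.braid a h) (hs.braid a h)
  mul_self i := Prod.ext (hr.mul_self i) (hs.mul_self i)

end CoxeterTypeA

theorem prod_map_prodMk {N : Type*} [Monoid N] (s : ℕ → N) (u : List ℕ) :
    (u.map fun i => (r i, s i)).prod = ((u.map r).prod, (u.map s).prod) := by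
  induction u with
  | nil => rfl
  | cons e u ih => simp [ih]

namespace BraidCompatible

variable {D E : ℕ → M}

theorem mul (hD : BraidCompatible n r D) (hE : BraidCompatible n r E)
    (hr : CoxeterTypeA n r) : BraidCompatible n r fun a => D a * E a where
  commute_of_far e a h := (hD.commute_of_far e a h).mul_right (hE.commute_of_far e a h)
  braid a h :=
    calc r a * (D (a + 1) * E (a + 1)) * r a
        = (r a * D (a + 1) * r a) * (r a * E (a + 1) * r a) := by
          simp only [mul_assoc, hr.mul_self_mul]
      _ = (r (a + 1) * D a * r (a + 1)) * (r (a + 1) * E a * r (a + 1)) := by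
          rw [hD.braid a h, hE.braid a h]
      _ = r (a + 1) * (D a * E a) * r (a + 1) := by simp only [mul_assoc, hr.mul_self_mul]

theorem of_inverse (hD : BraidCompatible n r D) (h₁ : ∀ a, D a * E a = 1)
    (h₂ : ∀ a, E a * D a = 1) (hr : CoxeterTypeA n r) : BraidCompatible n r E where
  commute_of_far e a h :=
    (hD.commute_of_far e a h).units_inv_right (u := ⟨D a, E a, h₁ a, h₂ a⟩)
  braid a h := by
    have h₁' : ∀ a x, D a * (E a * x) = x := fun a x => by rw [← mul_assoc, h₁, one_mul]
    have h₂' : ∀ a x, E a * (D a * x) = x := fun a x => by rw [← mul_assoc, h₂, one_mul]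
    refine left_inv_eq_right_inv (a := r a * D (a + 1) * r a) ?_ ?_
    · simp only [mul_assoc, hr.mul_self_mul, h₂', hr.mul_self]
    · rw [hD.braid a h]
      simp only [mul_assoc, hr.mul_self_mul, h₁', hr.mul_self]

end BraidCompatible

end TypeA

section WordProblem

variable {M : Type*} [Monoid M] {n : ℕ} {r : ℕ → M}

theorem CoxeterTypeA.mul_prod_range' (hr : CoxeterTypeA n r) {i j b : ℕ} (hji : j ≤ i)
    (hib : i + 1 < j + b) (hbn : j + b ≤ n - 1) :
    r (i + 1) * ((List.range' j b).map r).prod = ((List.range' j b).map r).prod * r i := by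
  induction b generalizing j with
  | zero => omega
  | succ b ih =>
    rw [List.range'_succ, List.map_cons, List.prod_cons]
    rcases hji.lt_or_eq with hlt | rfl
    · rw [← mul_assoc, (hr.commute_of_far _ _ (Or.inr (by omega))).eq, mul_assoc,
        ih (by omega) (by omega) (by omega), mul_assoc]
    · obtain ⟨b, rfl⟩ : ∃ b', b = b' + 1 := ⟨b - 1, by omega⟩
      have hcomm : Commute (r j) ((List.range' (j + 1 + 1) b).map r).prod :=
        hr.commute_prod fun e he => Or.inl (by rw [List.mem_range'_1] at he; omega)
      rw [List.range'_succ, List.map_cons, List.prod_cons, ← mul_assoc, ← mul_assoc,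
        ← hr.braid j (by omega), mul_assoc, mul_assoc, hcomm.eq]
      simp only [mul_assoc]

/-- The coset decomposition of `S_{m+1}` over `S_m`, on the level of words. -/
theorem CoxeterTypeA.exists_prod_eq_prod_range'_mul (hr : CoxeterTypeA n r) {m : ℕ}
    (hm : m ≤ n - 1) (u : List ℕ) (hu : ∀ e ∈ u, e < m) :
    ∃ j ≤ m, ∃ v : List ℕ, (∀ e ∈ v, e + 1 < m) ∧
      (u.map r).prod = ((List.range' j (m - j)).map r).prod * (v.map r).prod := by
  induction u with
  | nil => exact ⟨m, le_rfl, [], by simp, by simp⟩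
  | cons i u ih =>
    obtain ⟨j, hjm, v, hv, huv⟩ := ih fun e he => hu e (List.mem_cons_of_mem _ he)
    have hi : i < m := hu i List.mem_cons_self
    have hrow : ∀ k < m, ((List.range' k (m - k)).map r).prod =
        r k * ((List.range' (k + 1) (m - (k + 1))).map r).prod := fun k hk => by
      rw [show m - k = m - (k + 1) + 1 by omega, List.range'_succ, List.map_cons,
        List.prod_cons]
    rw [List.map_cons, List.prod_cons, huv]
    rcases lt_trichotomy (i + 1) j with hij | rfl | hji
    · refine ⟨j, hjm, i :: v, ?_, ?_⟩
      · simpa [List.forall_mem_cons] using ⟨by omega, hv⟩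
      · have hcomm : Commute (r i) ((List.range' j (m - j)).map r).prod :=
          hr.commute_prod fun e he => Or.inl (by rw [List.mem_range'_1] at he; omega)
        rw [← mul_assoc, hcomm.eq, List.map_cons, List.prod_cons, mul_assoc]
    · exact ⟨i, hi.le, v, hv, by rw [hrow i hi, mul_assoc]⟩
    · rcases (Nat.lt_succ_iff.mp hji).lt_or_eq with hji | rfl
      · obtain ⟨i, rfl⟩ : ∃ i', i = i' + 1 := ⟨i - 1, by omega⟩
        refine ⟨j, hjm, i :: v, ?_, ?_⟩
        · simpa [List.forall_mem_cons] using ⟨by omega, hv⟩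
        · rw [← mul_assoc, hr.mul_prod_range' (by omega) (by omega) (by omega),
            List.map_cons, List.prod_cons, mul_assoc]
      · exact ⟨j + 1, hi, v, hv, by rw [hrow j hi, mul_assoc, hr.mul_self_mul]⟩

def adjSwap (n : ℕ) : ℕ → Equiv.Perm (Fin n) := extendByOne swp

theorem adjSwap_of_not_lt {i : ℕ} (hi : ¬ i < n - 1) : adjSwap n i = 1 :=
  extendByOne_of_not_lt _ hi

theorem adjSwap_apply_val {i : ℕ} (hi : i < n - 1) (x : Fin n) :
    (adjSwap n i x : ℕ) = Equiv.swap i (i + 1) (x : ℕ) := by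
  rw [adjSwap, extendByOne_of_lt _ hi, swp, Equiv.swap_apply_def, Equiv.swap_apply_def]
  simp only [Fin.ext_iff, fa, fb]
  split_ifs <;> rfl

theorem coxeterTypeA_adjSwap : CoxeterTypeA n (adjSwap n) where
  commute_of_far e a h := by
    by_cases he : e < n - 1
    · by_cases ha : a < n - 1
      · refine Equiv.ext fun x => Fin.ext ?_
        simp only [Equiv.Perm.mul_apply, adjSwap_apply_val he, adjSwap_apply_val ha,
          Equiv.swap_apply_def]
        split_ifs <;> omega
      · simp [adjSwap_of_not_lt ha]
    · simp [adjSwap_of_not_lt he]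
  braid a h := by
    refine Equiv.ext fun x => Fin.ext ?_
    simp only [Equiv.Perm.mul_apply, adjSwap_apply_val (show a < n - 1 by omega),
      adjSwap_apply_val h, Equiv.swap_apply_def]
    split_ifs <;> omega
  mul_self i := by
    by_cases hi : i < n - 1
    · simp [adjSwap, extendByOne_of_lt _ hi, swp]
    · simp [adjSwap_of_not_lt hi]

theorem prod_adjSwap_apply_of_forall_lt {v : List ℕ} {x : Fin n} (hv : ∀ e ∈ v, e + 1 < x) :
    (v.map (adjSwap n)).prod x = x := by
  induction v with
  | nil => rfl
  | cons e v ih =>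
    have he : e + 1 < x := hv e List.mem_cons_self
    rw [List.map_cons, List.prod_cons, Equiv.Perm.mul_apply,
      ih fun e' he' => hv e' (List.mem_cons_of_mem _ he')]
    exact Fin.ext <| by
      rw [adjSwap_apply_val (by omega), Equiv.swap_apply_of_ne_of_ne (by omega) (by omega)]

theorem prod_range'_adjSwap_apply_val {j b : ℕ} {x : Fin n} (hx : (x : ℕ) = j + b) :
    (((List.range' j b).map (adjSwap n)).prod x : ℕ) = j := by
  induction b generalizing j with
  | zero => simpa using hx
  | succ b ih =>
    rw [List.range'_succ, List.map_cons, List.prod_cons, Equiv.Perm.mul_apply,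
      adjSwap_apply_val (by omega), ih (by omega), Equiv.swap_apply_right]

/-- Run in `M × Equiv.Perm (Fin n)`, the coset decomposition of a word in `ρ_0, …, ρ_{m-1}` with
trivial permutation must have `j = m`, as evaluation at the point `m` shows. -/
theorem CoxeterTypeA.prod_eq_one (hr : CoxeterTypeA n r) {u : List ℕ}
    (hu : ∀ e ∈ u, e < n - 1) (h : (u.map (adjSwap n)).prod = 1) : (u.map r).prod = 1 := by
  suffices ∀ m ≤ n - 1, ∀ u : List ℕ, (∀ e ∈ u, e < m) →
      (u.map (adjSwap n)).prod = 1 → (u.map r).prod = 1 from this _ le_rfl u hu h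
  intro m
  induction m with
  | zero =>
    rintro - (_ | ⟨e, u⟩) hu -
    · rfl
    · exact absurd (hu e List.mem_cons_self) (Nat.not_lt_zero e)
  | succ m ih =>
    intro hm u hu h
    obtain ⟨j, hj, v, hv, huv⟩ :=
      (hr.prodMk coxeterTypeA_adjSwap).exists_prod_eq_prod_range'_mul hm u hu
    simp only [prod_map_prodMk, Prod.mk_mul_mk, Prod.mk.injEq] at huv
    have htop : j = m + 1 := by
      have := congrArg (fun p : Equiv.Perm (Fin n) => (p ⟨m + 1, by omega⟩ : ℕ)) huv.2
      simp only [h, Equiv.Perm.coe_one, id_eq, Equiv.Perm.mul_apply] at this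
      rw [prod_adjSwap_apply_of_forall_lt (v := v) hv,
        prod_range'_adjSwap_apply_val (by simp; omega)] at this
      omega
    subst htop
    simp only [Nat.sub_self, List.range'_zero, List.map_nil, List.prod_nil, one_mul] at huv h
    rw [huv.1]
    exact ih (by omega) v (fun e he => by have := hv e he; omega) (huv.2 ▸ h)

end WordProblem

section Spread

theorem conj_mul_mul_of_commute {M : Type*} [Monoid M] {x p q y : M} (hp : Commute x p)
    (hq : Commute x q) : x * (p * y * q) * x = p * (x * y * x) * q := by
  simp only [mul_assoc]
  rw [hp.left_comm, ← hq.eq]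

variable {M : Type*} [Monoid M] {n : ℕ} {r D : ℕ → M}

def between (a b : ℕ) : List ℕ := List.range' (a + 1) (b - 1 - a)

theorem mem_between {a b e : ℕ} : e ∈ between a b ↔ a < e ∧ e < b := by
  rw [between, List.mem_range'_1]; omega

def spreadUp (r D : ℕ → M) (a b : ℕ) : M :=
  ((between a b).reverse.map r).prod * D a * ((between a b).map r).prod

/-- The common pattern of `λ_{k,l}`, `λ̄_{k,l}` and `y_{k,l}`, with `D a` in the role of
`λ_{a,a+1}`; for `k > l` the base element is `ρ_l λ_{l,l+1} ρ_l = λ_{l+1,l}`. -/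
def spread (r D : ℕ → M) (k l : ℕ) : M :=
  if k < l then spreadUp r D k l else spreadUp r (fun a => r a * D a * r a) l k

theorem spread_of_lt {k l : ℕ} (h : k < l) : spread r D k l = spreadUp r D k l := if_pos h

theorem spread_of_gt {k l : ℕ} (h : l < k) :
    spread r D k l = spreadUp r (fun a => r a * D a * r a) l k := if_neg (by omega)

theorem spreadUp_succ (a : ℕ) : spreadUp r D a (a + 1) = D a := by
  simp [spreadUp, between]

theorem conj_spreadUp_succ_right {a b : ℕ} (hab : a < b) :
    r b * spreadUp r D a b * r b = spreadUp r D a (b + 1) := by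
  have : between a (b + 1) = between a b ++ [b] := by
    rw [between, between, show b + 1 - 1 - a = b - 1 - a + 1 by omega, List.range'_1_concat,
      show a + 1 + (b - 1 - a) = b by omega]
  simp only [spreadUp, this, List.reverse_append, List.map_append, List.prod_append,
    List.reverse_singleton, List.map_cons, List.map_nil, List.prod_cons, List.prod_nil, mul_one,
    List.singleton_append, mul_assoc]

theorem conj_spreadUp_succ_left (hr : CoxeterTypeA n r) (hD : BraidCompatible n r D)
    {a b : ℕ} (hab : a + 1 < b) (hb : b < n) :
    r a * spreadUp r D a b * r a = spreadUp r D (a + 1) b := by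
  have hrow : between a b = (a + 1) :: between (a + 1) b := by
    rw [between, between, show b - 1 - a = b - 1 - (a + 1) + 1 by omega, List.range'_succ]
  have hfar : ∀ e ∈ between (a + 1) b, a + 1 < e ∨ e + 1 < a :=
    fun e he => Or.inl (mem_between.mp he).1
  have hsplit : spreadUp r D a b = ((between (a + 1) b).reverse.map r).prod *
      (r (a + 1) * D a * r (a + 1)) * ((between (a + 1) b).map r).prod := by
    simp [spreadUp, hrow, mul_assoc]
  rw [hsplit, conj_mul_mul_of_commute
      (hr.commute_prod fun e he => hfar e (List.mem_reverse.mp he)) (hr.commute_prod hfar),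
    ← hD.braid a (by omega), hr.conj_conj, spreadUp]

theorem conj_spreadUp_of_far (hr : CoxeterTypeA n r) (hD : BraidCompatible n r D)
    {i a b : ℕ} (hfar : i + 1 < a ∨ b < i) (hab : a < b) :
    r i * spreadUp r D a b * r i = spreadUp r D a b := by
  have hrow : ∀ e ∈ between a b, i + 1 < e ∨ e + 1 < i :=
    fun e he => by have := mem_between.mp he; omega
  rw [spreadUp, conj_mul_mul_of_commute
      (hr.commute_prod fun e he => hrow e (List.mem_reverse.mp he)) (hr.commute_prod hrow),
    (hD.commute_of_far i a (by omega)).eq, mul_assoc (D a), hr.mul_self, mul_one]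

theorem conj_spreadUp_of_between (hr : CoxeterTypeA n r) (hD : BraidCompatible n r D)
    {i a b : ℕ} (hai : a < i) (hib : i + 1 < b) (hb : b < n) :
    r i * spreadUp r D a b * r i = spreadUp r D a b := by
  set P := ((between a b).reverse.map r).prod
  set Q := ((between a b).map r).prod
  have hQ : r (i + 1) * Q = Q * r i := hr.mul_prod_range' (by omega) (by omega) (by omega)
  have hP : r i * P = P * r (i + 1) :=
    calc r i * P = P * Q * r i * P := by rw [hr.prod_reverse_mul_prod, one_mul]
      _ = P * r (i + 1) * (Q * P) := by rw [mul_assoc P, ← hQ]; simp only [mul_assoc]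
      _ = P * r (i + 1) := by rw [hr.prod_mul_prod_reverse, mul_one]
  have hDi : Commute (r (i + 1)) (D a) := hD.commute_of_far _ _ (Or.inr (by omega))
  calc r i * (P * D a * Q) * r i = P * D a * (r (i + 1) * Q) * r i := by
        rw [← mul_assoc, ← mul_assoc, hP, mul_assoc P, hDi.eq]; simp only [mul_assoc]
    _ = P * D a * Q := by rw [hQ, mul_assoc, mul_assoc Q, hr.mul_self, mul_one]

theorem conj_spreadUp (hr : CoxeterTypeA n r) (hD : BraidCompatible n r D)
    {i a b : ℕ} (hab : a < b) (hb : b < n) :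
    r i * spreadUp r D a b * r i =
      spread r D (Equiv.swap i (i + 1) a) (Equiv.swap i (i + 1) b) := by
  rcases (by omega : (i + 1 < a ∨ b < i) ∨ (a < i ∧ i + 1 < b) ∨ i + 1 = a ∨ i = a ∨
      (a < i ∧ i + 1 = b) ∨ i = b) with hfar | ⟨hai, hib⟩ | rfl | rfl | ⟨hai, rfl⟩ | rfl
  · rw [Equiv.swap_apply_of_ne_of_ne (x := a) (by omega) (by omega),
      Equiv.swap_apply_of_ne_of_ne (x := b) (by omega) (by omega), spread_of_lt hab]
    exact conj_spreadUp_of_far hr hD hfar hab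
  · rw [Equiv.swap_apply_of_ne_of_ne (x := a) (by omega) (by omega),
      Equiv.swap_apply_of_ne_of_ne (x := b) (by omega) (by omega), spread_of_lt hab]
    exact conj_spreadUp_of_between hr hD hai hib hb
  · rw [Equiv.swap_apply_right, Equiv.swap_apply_of_ne_of_ne (x := b) (by omega) (by omega),
      spread_of_lt (by omega), ← conj_spreadUp_succ_left hr hD hab hb, hr.conj_conj]
  · rw [Equiv.swap_apply_left]
    rcases (Nat.succ_le_of_lt hab).lt_or_eq with hab | rfl
    · rw [Equiv.swap_apply_of_ne_of_ne (x := b) (by omega) (by omega), spread_of_lt hab,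
        conj_spreadUp_succ_left hr hD hab hb]
    · rw [Equiv.swap_apply_right, spread_of_gt (by omega), spreadUp_succ, spreadUp_succ]
  · rw [Equiv.swap_apply_of_ne_of_ne (x := a) (by omega) (by omega), Equiv.swap_apply_right,
      spread_of_lt hai, ← conj_spreadUp_succ_right hai, hr.conj_conj]
  · rw [Equiv.swap_apply_of_ne_of_ne (x := a) (by omega) (by omega), Equiv.swap_apply_left,
      spread_of_lt (by omega), conj_spreadUp_succ_right hab]

theorem spread_conj_eq_spread_flip (hr : CoxeterTypeA n r) {k l : ℕ} (hkl : k ≠ l) :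
    spread r (fun a => r a * D a * r a) k l = spread r D l k := by
  rcases hkl.lt_or_gt with h | h
  · rw [spread_of_lt h, spread_of_gt h]
  · rw [spread_of_gt h, spread_of_lt h]
    simp only [hr.conj_conj]

theorem conj_spread (hr : CoxeterTypeA n r) (hD : BraidCompatible n r D) (i : ℕ) {k l : ℕ}
    (hk : k < n) (hl : l < n) (hkl : k ≠ l) :
    r i * spread r D k l * r i =
      spread r D (Equiv.swap i (i + 1) k) (Equiv.swap i (i + 1) l) := by
  rcases hkl.lt_or_gt with h | h
  · rw [spread_of_lt h, conj_spreadUp hr hD h hl]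
  · have hD' : BraidCompatible n r fun a => r a * D a * r a :=
      ((hr.toBraidCompatible.mul hD hr).mul hr.toBraidCompatible hr)
    rw [spread_of_gt h, conj_spreadUp hr hD' h hk,
      spread_conj_eq_spread_flip hr ((Equiv.injective _).ne h.ne)]

theorem map_spread_eq_one (hr : CoxeterTypeA n r) {N : Type*} [Monoid N] (f : M →* N)
    (hD : ∀ a, f (D a) = 1) (k l : ℕ) : f (spread r D k l) = 1 := by
  have key : ∀ D' : ℕ → M, (∀ a, f (D' a) = 1) → ∀ a b, f (spreadUp r D' a b) = 1 := by
    intro D' hD' a b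
    rw [spreadUp, map_mul, map_mul, hD', mul_one, ← map_mul, hr.prod_reverse_mul_prod, map_one]
  unfold spread
  split_ifs
  · exact key D hD k l
  · refine key _ (fun a => ?_) l k
    rw [map_mul, map_mul, hD, mul_one, ← map_mul, hr.mul_self, map_one]

end Spread

variable {n : ℕ}

def rho (n : ℕ) : ℕ → STVB n := extendByOne (rhoE n)
def sig (n : ℕ) : ℕ → STVB n := extendByOne (sigE n)
def sigb (n : ℕ) : ℕ → STVB n := extendByOne (sigbE n)
def tau (n : ℕ) : ℕ → STVB n := extendByOne (tauE n)

theorem mkS_dite (W : Fin (n - 1) → FM n) (k : ℕ) :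
    mkS n (if h : k < n - 1 then W ⟨k, h⟩ else 1) = extendByOne (fun i => mkS n (W i)) k := by
  unfold extendByOne
  split_ifs <;> simp

@[simp] theorem mkS_WrN (k : ℕ) : mkS n (WrN n k) = rho n k := mkS_dite _ k
@[simp] theorem mkS_WsN (k : ℕ) : mkS n (WsN n k) = sig n k := mkS_dite _ k
@[simp] theorem mkS_WsbN (k : ℕ) : mkS n (WsbN n k) = sigb n k := mkS_dite _ k
@[simp] theorem mkS_WtN (k : ℕ) : mkS n (WtN n k) = tau n k := mkS_dite _ k

theorem lam_eq_spread (k l : Fin n) :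
    lam n k l = spread (rho n) (fun a => rho n a * sigb n a) k l := by
  unfold lam lamW spread spreadUp between asc desc
  split_ifs <;> simp [map_list_prod, Function.comp_def]

theorem lamBar_eq_spread (k l : Fin n) :
    lamBar n k l = spread (rho n) (fun a => sig n a * rho n a) k l := by
  unfold lamBar lamBarW spread spreadUp between asc desc
  split_ifs <;> simp [map_list_prod, Function.comp_def]

theorem yel_eq_spread (k l : Fin n) :
    yel n k l = spread (rho n) (fun a => tau n a * rho n a) k l := by
  unfold yel yW spread spreadUp between asc desc
  split_ifs <;> simp [map_list_prod, Function.comp_def]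

theorem extendByOne_mul_eq_one {M : Type*} [Monoid M] {x y : Fin (n - 1) → M}
    (h : ∀ i, x i * y i = 1) (k : ℕ) : extendByOne x k * extendByOne y k = 1 := by
  unfold extendByOne
  split_ifs
  exacts [h _, one_mul 1]

theorem braidCompatible_extendByOne {M : Type*} [Monoid M] {x y : Fin (n - 1) → M}
    (hc : ∀ i j, Far i j → Commute (x i) (y j))
    (hb : ∀ i j : Fin (n - 1), j.val = i.val + 1 → x i * y j * x i = x j * y i * x j) :
    BraidCompatible n (extendByOne x) (extendByOne y) where
  commute_of_far e a h := by
    unfold extendByOne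
    split_ifs
    exacts [hc _ _ h, Commute.one_right _, Commute.one_left _, Commute.one_left _]
  braid a h := by
    simp only [extendByOne_of_lt _ h, extendByOne_of_lt _ (show a < n - 1 by omega)]
    exact hb _ _ rfl

theorem mkS_eq_of_rel {a b : FM n} (h : Rel n a b) : mkS n a = mkS n b :=
  PresentedMonoid.mk_eq_mk_of_rel h

theorem coxeterTypeA_rho : CoxeterTypeA n (rho n) where
  toBraidCompatible := braidCompatible_extendByOne
    (fun _ _ h => by simpa only [commute_iff_eq, rhoE, map_mul] using mkS_eq_of_rel (Rel.rr h))
    (fun _ _ h => by simpa only [rhoE, map_mul] using mkS_eq_of_rel (Rel.rrr h))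
  mul_self := extendByOne_mul_eq_one fun i => by
    simpa only [rhoE, map_mul, map_one] using mkS_eq_of_rel (Rel.rho2 i)

theorem braidCompatible_sig : BraidCompatible n (rho n) (sig n) :=
  braidCompatible_extendByOne
    (fun _ _ h => Commute.symm <| by
      simpa only [commute_iff_eq, rhoE, sigE, map_mul] using mkS_eq_of_rel (Rel.sr (Or.symm h)))
    (fun _ _ h => by simpa only [rhoE, sigE, map_mul] using mkS_eq_of_rel (Rel.rsr h))

theorem braidCompatible_sigb : BraidCompatible n (rho n) (sigb n) :=
  braidCompatible_sig.of_inverse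
    (extendByOne_mul_eq_one fun i => by
      simpa only [sigE, sigbE, map_mul, map_one] using mkS_eq_of_rel (Rel.ssb i))
    (extendByOne_mul_eq_one fun i => by
      simpa only [sigE, sigbE, map_mul, map_one] using mkS_eq_of_rel (Rel.sbs i))
    coxeterTypeA_rho

theorem braidCompatible_tau : BraidCompatible n (rho n) (tau n) :=
  braidCompatible_extendByOne
    (fun _ _ h => Commute.symm <| by
      simpa only [commute_iff_eq, rhoE, tauE, map_mul] using mkS_eq_of_rel (Rel.tr (Or.symm h)))
    (fun _ _ h => by simpa only [rhoE, tauE, map_mul] using mkS_eq_of_rel (Rel.rtr h))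

theorem rho_mul_gamE_mul_rho {i : ℕ} (hi : i < n - 1) (j : Fin n) :
    rho n i * gamE n j * rho n i = gamE n (adjSwap n i j) := by
  have hgr : gamE n (fb ⟨i, hi⟩) * rho n i = rho n i * gamE n (fa ⟨i, hi⟩) := by
    simpa only [rho, extendByOne_of_lt _ hi, rhoE, gamE, map_mul]
      using mkS_eq_of_rel (Rel.grel ⟨i, hi⟩)
  rw [adjSwap, extendByOne_of_lt _ hi, swp]
  by_cases ha : j = fa ⟨i, hi⟩
  · rw [ha, Equiv.swap_apply_left, ← hgr, mul_assoc, coxeterTypeA_rho.mul_self, mul_one]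
  by_cases hb : j = fb ⟨i, hi⟩
  · rw [hb, Equiv.swap_apply_right, mul_assoc, hgr, coxeterTypeA_rho.mul_self_mul]
  have hc : gamE n j * rho n i = rho n i * gamE n j := by
    simpa only [rho, extendByOne_of_lt _ hi, rhoE, gamE, map_mul]
      using mkS_eq_of_rel (Rel.grc ha hb)
  rw [Equiv.swap_apply_of_ne_of_ne ha hb, mul_assoc, hc, coxeterTypeA_rho.mul_self_mul]

theorem rho_conj_spread {D : ℕ → STVB n} (hD : BraidCompatible n (rho n) D) {i : ℕ}
    (hi : i < n - 1) {k l : Fin n} (hkl : k ≠ l) :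
    rho n i * spread (rho n) D k l * rho n i =
      spread (rho n) D (adjSwap n i k) (adjSwap n i l) := by
  rw [conj_spread coxeterTypeA_rho hD i k.isLt l.isLt (Fin.val_ne_of_ne hkl),
    adjSwap_apply_val hi, adjSwap_apply_val hi]

def pureGens (n : ℕ) : Set (STVB n) :=
  {x : STVB n | ∃ k l : Fin n, k ≠ l ∧ (x = lam n k l ∨ x = lamBar n k l ∨ x = yel n k l)} ∪
    Set.range (gamE n)

theorem rho_conj_mem_pureGens {i : ℕ} (hi : i < n - 1) {x : STVB n} (hx : x ∈ pureGens n) :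
    rho n i * x * rho n i ∈ pureGens n := by
  have hρ : CoxeterTypeA n (rho n) := coxeterTypeA_rho
  have hne : ∀ {k l : Fin n}, k ≠ l → adjSwap n i k ≠ adjSwap n i l := (Equiv.injective _).ne
  rcases hx with ⟨k, l, hkl, rfl | rfl | rfl⟩ | ⟨j, rfl⟩
  · refine Or.inl ⟨_, _, hne hkl, Or.inl ?_⟩
    rw [lam_eq_spread, lam_eq_spread,
      rho_conj_spread (hρ.toBraidCompatible.mul braidCompatible_sigb hρ) hi hkl]
  · refine Or.inl ⟨_, _, hne hkl, Or.inr (Or.inl ?_)⟩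
    rw [lamBar_eq_spread, lamBar_eq_spread,
      rho_conj_spread (braidCompatible_sig.mul hρ.toBraidCompatible hρ) hi hkl]
  · refine Or.inl ⟨_, _, hne hkl, Or.inr (Or.inr ?_)⟩
    rw [yel_eq_spread, yel_eq_spread,
      rho_conj_spread (braidCompatible_tau.mul hρ.toBraidCompatible hρ) hi hkl]
  · exact Or.inr ⟨_, (rho_mul_gamE_mul_rho hi j).symm⟩

theorem rho_conj_mem_closure_pureGens {i : ℕ} (hi : i < n - 1) {x : STVB n}
    (hx : x ∈ Submonoid.closure (pureGens n)) :
    rho n i * x * rho n i ∈ Submonoid.closure (pureGens n) := by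
  induction hx using Submonoid.closure_induction with
  | mem x hx => exact Submonoid.subset_closure (rho_conj_mem_pureGens hi hx)
  | one => simpa only [mul_one, coxeterTypeA_rho.mul_self] using Submonoid.one_mem _
  | mul x y _ _ hx hy =>
    simpa only [mul_assoc, coxeterTypeA_rho.mul_self_mul] using Submonoid.mul_mem _ hx hy

theorem sigE_eq_lamBar_mul_rho (i : Fin (n - 1)) :
    sigE n i = lamBar n (fa i) (fb i) * rho n i := by
  rw [lamBar_eq_spread]
  change _ = spread _ _ (i : ℕ) ((i : ℕ) + 1) * _
  rw [spread_of_lt (Nat.lt_succ_self _), spreadUp_succ, mul_assoc, coxeterTypeA_rho.mul_self,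
    mul_one, sig, extendByOne_of_lt _ i.isLt]

theorem sigbE_eq_lam_mul_rho (i : Fin (n - 1)) :
    sigbE n i = lam n (fb i) (fa i) * rho n i := by
  rw [lam_eq_spread]
  change _ = spread _ _ ((i : ℕ) + 1) (i : ℕ) * _
  rw [spread_of_gt (Nat.lt_succ_self _), spreadUp_succ]
  simp only [mul_assoc, coxeterTypeA_rho.mul_self_mul, coxeterTypeA_rho.mul_self, mul_one]
  rw [sigb, extendByOne_of_lt _ i.isLt]

theorem tauE_eq_yel_mul_rho (i : Fin (n - 1)) :
    tauE n i = yel n (fa i) (fb i) * rho n i := by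
  rw [yel_eq_spread]
  change _ = spread _ _ (i : ℕ) ((i : ℕ) + 1) * _
  rw [spread_of_lt (Nat.lt_succ_self _), spreadUp_succ, mul_assoc, coxeterTypeA_rho.mul_self,
    mul_one, tau, extendByOne_of_lt _ i.isLt]

theorem fa_ne_fb (i : Fin (n - 1)) : fa i ≠ fb i := by
  simp [fa, fb, Fin.ext_iff]

theorem exists_mem_closure_mul_prod_rho (x : STVB n) :
    ∃ c ∈ Submonoid.closure (pureGens n), ∃ u : List ℕ, (∀ e ∈ u, e < n - 1) ∧
      x = c * (u.map (rho n)).prod := by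
  obtain ⟨w, rfl⟩ := PresentedMonoid.surjective_mk x
  induction w using FreeMonoid.inductionOn' with
  | one => exact ⟨1, Submonoid.one_mem _, [], by simp, by simp⟩
  | of_mul g w ih =>
    obtain ⟨c, hc, u, hu, hw⟩ := ih
    rw [map_mul, hw]
    have hstep : ∀ s ∈ Submonoid.closure (pureGens n), ∀ i : Fin (n - 1),
        mkS n (.of g) = s * rho n i → ∃ c' ∈ Submonoid.closure (pureGens n), ∃ u' : List ℕ,
          (∀ e ∈ u', e < n - 1) ∧ mkS n (.of g) * (c * (u.map (rho n)).prod) =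
            c' * (u'.map (rho n)).prod := fun s hs i hg =>
      ⟨s * (rho n i * c * rho n i),
        Submonoid.mul_mem _ hs (rho_conj_mem_closure_pureGens i.isLt hc), i :: u,
        List.forall_mem_cons.mpr ⟨i.isLt, hu⟩, by
          simp only [hg, List.map_cons, List.prod_cons, mul_assoc,
            coxeterTypeA_rho.mul_self_mul]⟩
    have hgen : ∀ {s}, s ∈ pureGens n → s ∈ Submonoid.closure (pureGens n) :=
      fun hs => Submonoid.subset_closure hs
    cases g with
    | sig i =>
      exact hstep _ (hgen (Or.inl ⟨_, _, fa_ne_fb i, Or.inr (Or.inl rfl)⟩)) i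
        (sigE_eq_lamBar_mul_rho i)
    | sigb i =>
      exact hstep _ (hgen (Or.inl ⟨_, _, (fa_ne_fb i).symm, Or.inl rfl⟩)) i
        (sigbE_eq_lam_mul_rho i)
    | tau i =>
      exact hstep _ (hgen (Or.inl ⟨_, _, fa_ne_fb i, Or.inr (Or.inr rfl)⟩)) i
        (tauE_eq_yel_mul_rho i)
    | rho i =>
      exact hstep 1 (Submonoid.one_mem _) i
        (by rw [one_mul, rho, extendByOne_of_lt _ i.isLt]; rfl)
    | gam j =>
      exact ⟨gamE n j * c, Submonoid.mul_mem _ (hgen (Or.inr ⟨j, rfl⟩)) hc, u, hu,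
        (mul_assoc _ _ _).symm⟩

end SingTVB

open SingTVB in
theorem stvp_generators_general (n : ℕ) (φ : STVB n →* Equiv.Perm (Fin n))
    (hs : ∀ i : Fin (n - 1), φ (sigE n i) = swp i)
    (hsb : ∀ i : Fin (n - 1), φ (sigbE n i) = swp i)
    (ht : ∀ i : Fin (n - 1), φ (tauE n i) = swp i)
    (hr : ∀ i : Fin (n - 1), φ (rhoE n i) = swp i)
    (hg : ∀ j : Fin n, φ (gamE n j) = 1) :
    Submonoid.closure
      ({x : STVB n | ∃ k l : Fin n, k ≠ l ∧ (x = lam n k l ∨ x = lamBar n k l ∨ x = yel n k l)}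
        ∪ Set.range (gamE n)) = MonoidHom.mker φ := by
  have hext : ∀ {x : Fin (n - 1) → STVB n}, (∀ i, φ (x i) = swp i) →
      ∀ e, φ (extendByOne x e) = adjSwap n e := fun hx e => by
    rw [adjSwap, extendByOne, extendByOne]
    split_ifs
    exacts [hx _, map_one φ]
  have hspread : ∀ {x y : Fin (n - 1) → STVB n}, (∀ i, φ (x i) = swp i) →
      (∀ i, φ (y i) = swp i) → ∀ k l,
        φ (spread (rho n) (fun a => extendByOne x a * extendByOne y a) k l) = 1 :=
    fun hx hy => map_spread_eq_one coxeterTypeA_rho φ fun a => by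
      rw [map_mul, hext hx, hext hy, coxeterTypeA_adjSwap.mul_self]
  have hgens : pureGens n ⊆ MonoidHom.mker φ := by
    rintro x (⟨k, l, -, rfl | rfl | rfl⟩ | ⟨j, rfl⟩)
    · exact (lam_eq_spread k l).symm ▸ hspread hr hsb k l
    · exact (lamBar_eq_spread k l).symm ▸ hspread hs hr k l
    · exact (yel_eq_spread k l).symm ▸ hspread ht hr k l
    · exact hg j
  refine le_antisymm (Submonoid.closure_le.mpr hgens) fun x hx => ?_
  obtain ⟨c, hc, u, hu, rfl⟩ := exists_mem_closure_mul_prod_rho x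
  have hperm : (u.map (adjSwap n)).prod = 1 := by
    rw [MonoidHom.mem_mker, map_mul, Submonoid.closure_le.mpr hgens hc, one_mul,
      map_list_prod, List.map_map] at hx
    rwa [show φ ∘ rho n = adjSwap n from funext (hext hr)] at hx
  rwa [coxeterTypeA_rho.prod_eq_one hu hperm, mul_one]

open SingTVB in
/-- the singular twisted virtual pure braid monoid `STVP n = φ₁⁻¹(1)` is
generated, as a monoid, by the elements `λ_{k,l}`, `λ̄_{k,l}`, `y_{k,l}` (`k ≠ l`) and the
`γ_j`. -/
theorem stvp_generators (n : ℕ) (hn : 2 ≤ n) (φ : STVB n →* Equiv.Perm (Fin n))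
    (hs : ∀ i : Fin (n - 1), φ (sigE n i) = swp i)
    (hsb : ∀ i : Fin (n - 1), φ (sigbE n i) = swp i)
    (ht : ∀ i : Fin (n - 1), φ (tauE n i) = swp i)
    (hr : ∀ i : Fin (n - 1), φ (rhoE n i) = swp i)
    (hg : ∀ j : Fin n, φ (gamE n j) = 1) :
    Submonoid.closure
      ({x : STVB n | ∃ k l : Fin n, k ≠ l ∧ (x = lam n k l ∨ x = lamBar n k l ∨ x = yel n k l)}
        ∪ Set.range (gamE n)) = MonoidHom.mker φ :=
  stvp_generators_general n φ hs hsb ht hr hg
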